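/- arXiv:1209.3197 — 4 statements merged into one kernel-verified Lean document; each statement's English description precedes it below -/
import Mathlib

section
/- For integers 0 < m < n and any P ∈ Gr_{m,n}, the minimal polynomial of the ℂ-linear map ad_P : ℂ^{n×n} → ℂ^{n×n}, X ↦ PX − XP, equals s³ − s; in particular ad_P³ = ad_P. -/
open Matrix Polynomial

/-- The Grassmannian `Gr_{m,n}`: Hermitian rank-`m` projection matrices in `ℂ^{n×n}`. -/
def Grassmannian (m n : ℕ) : Set (Matrix (Fin n) (Fin n) ℂ) :=
  {P | Pᴴ = P ∧ P * P = P ∧ Matrix.trace P = (m : ℂ)}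

/-- The linear endomorphism `ad_P : X ↦ PX − XP` of `ℂ^{n×n}`. -/
noncomputable def adP (n : ℕ) (P : Matrix (Fin n) (Fin n) ℂ) :
    Module.End ℂ (Matrix (Fin n) (Fin n) ℂ) :=
  LinearMap.mulLeft ℂ P - LinearMap.mulRight ℂ P

lemma adP_apply (n : ℕ) (P X : Matrix (Fin n) (Fin n) ℂ) :
    adP n P X = P * X - X * P := rfl

lemma sandwich_entry {n : ℕ} (A B : Matrix (Fin n) (Fin n) ℂ) (x y a b : Fin n) :
    (A * single x y (1 : ℂ) * B) a b = A a x * B y b := by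
  rw [Matrix.mul_apply, Finset.sum_eq_single y]
  · rw [Matrix.mul_single_apply_same, mul_one]
  · intro c _ hc
    rw [Matrix.mul_single_apply_of_ne 1 x y a c hc, zero_mul]
  · simp

/-- For `0 < m < n` and `P ∈ Gr_{m,n}`, the minimal polynomial of
`ad_P : ℂ^{n×n} → ℂ^{n×n}`, `X ↦ PX − XP`, equals `s³ − s`; in particular `ad_P³ = ad_P`. -/
theorem minpoly_adP (m n : ℕ) (hm : 0 < m) (hmn : m < n)
    (P : Matrix (Fin n) (Fin n) ℂ) (hP : P ∈ Grassmannian m n) :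
    minpoly ℂ (adP n P) = X ^ 3 - X ∧ adP n P ^ 3 = adP n P := by
  obtain ⟨-, h2, htr⟩ := hP
  have hn : 0 < n := lt_trans hm hmn
  set Q : Matrix (Fin n) (Fin n) ℂ := 1 - P with hQ
  have hQP : Q * P = 0 := by rw [hQ, sub_mul, one_mul, h2, sub_self]
  have hPQ : P * Q = 0 := by rw [hQ, mul_sub, mul_one, h2, sub_self]
  -- the cube identity
  have hcube : adP n P ^ 3 = adP n P := by
    refine LinearMap.ext fun X => ?_
    simp only [Module.End.pow_apply, Function.iterate_succ, Function.iterate_zero,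
      Function.comp_apply, id_eq, adP_apply]
    have h2p : ∀ Y : Matrix (Fin n) (Fin n) ℂ, P * (P * Y) = P * Y := fun Y => by
      rw [← mul_assoc, h2]
    simp only [mul_sub, sub_mul, mul_assoc, h2, h2p]
    abel
  refine ⟨?_, hcube⟩
  have hint : IsIntegral ℂ (adP n P) := Algebra.IsIntegral.isIntegral _
  have haev : aeval (adP n P) (X ^ 3 - X : ℂ[X]) = 0 := by
    simp [map_sub, aeval_X_pow, aeval_X, hcube]
  have hdvd : minpoly ℂ (adP n P) ∣ X ^ 3 - X := minpoly.dvd ℂ _ haev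
  -- nonzero matrices
  have hP0 : P ≠ 0 := by
    intro h
    rw [h, trace_zero] at htr
    exact_mod_cast hm.ne' (by exact_mod_cast htr.symm)
  have hQ0 : Q ≠ 0 := by
    intro h
    have hP1 : P = 1 := by rwa [hQ, sub_eq_zero, eq_comm] at h
    rw [hP1, trace_one] at htr
    simp only [Fintype.card_fin] at htr
    exact hmn.ne (by exact_mod_cast htr.symm)
  obtain ⟨i, k, hik⟩ : ∃ i k, P i k ≠ 0 := by
    by_contra h; push_neg at h
    exact hP0 (by ext i k; simp [h i k])
  obtain ⟨l, j, hlj⟩ : ∃ l j, Q l j ≠ 0 := by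
    by_contra h; push_neg at h
    exact hQ0 (by ext l j; simp [h l j])
  -- eigenvalue 1
  have hev1 : Module.End.HasEigenvalue (adP n P) 1 := by
    apply Module.End.hasEigenvalue_of_hasEigenvector
      (x := P * single k l 1 * Q)
    constructor
    · rw [Module.End.mem_eigenspace_iff, adP_apply, one_smul]
      rw [← mul_assoc, ← mul_assoc, h2, mul_assoc (P * single k l 1), hQP, mul_zero,
        sub_zero]
    · intro h
      have := congrFun (congrFun h i) j
      rw [sandwich_entry] at this
      simp only [Matrix.zero_apply] at this
      exact (mul_ne_zero hik hlj) this
  -- eigenvalue -1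
  have hevm1 : Module.End.HasEigenvalue (adP n P) (-1) := by
    apply Module.End.hasEigenvalue_of_hasEigenvector
      (x := Q * single j i 1 * P)
    constructor
    · rw [Module.End.mem_eigenspace_iff, adP_apply, neg_one_smul]
      rw [← mul_assoc, ← mul_assoc, hPQ, zero_mul, zero_mul, zero_sub,
        mul_assoc (Q * single j i 1), h2]
    · intro h
      have := congrFun (congrFun h l) k
      rw [sandwich_entry] at this
      simp only [Matrix.zero_apply] at this
      exact (mul_ne_zero hlj hik) this
  -- eigenvalue 0
  have hev0 : Module.End.HasEigenvalue (adP n P) 0 := by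
    apply Module.End.hasEigenvalue_of_hasEigenvector (x := (1 : Matrix (Fin n) (Fin n) ℂ))
    constructor
    · rw [Module.End.mem_eigenspace_iff, adP_apply, zero_smul, mul_one, one_mul, sub_self]
    · intro h
      have := congrFun (congrFun h ⟨0, hn⟩) ⟨0, hn⟩
      simp at this
  set p := minpoly ℂ (adP n P) with hp
  have hr0 : (X - C (0 : ℂ)) ∣ p := dvd_iff_isRoot.mpr (Module.End.isRoot_of_hasEigenvalue hev0)
  have hr1 : (X - C (1 : ℂ)) ∣ p := dvd_iff_isRoot.mpr (Module.End.isRoot_of_hasEigenvalue hev1)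
  have hrm1 : (X - C (-1 : ℂ)) ∣ p :=
    dvd_iff_isRoot.mpr (Module.End.isRoot_of_hasEigenvalue hevm1)
  have c01 : IsCoprime (X - C (0 : ℂ)) (X - C (1 : ℂ)) :=
    isCoprime_X_sub_C_of_isUnit_sub (by norm_num)
  have c0m1 : IsCoprime (X - C (0 : ℂ)) (X - C (-1 : ℂ)) :=
    isCoprime_X_sub_C_of_isUnit_sub (by norm_num)
  have c1m1 : IsCoprime (X - C (1 : ℂ)) (X - C (-1 : ℂ)) :=
    isCoprime_X_sub_C_of_isUnit_sub (by norm_num)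
  have hmul : (X - C (0 : ℂ)) * (X - C 1) ∣ p := c01.mul_dvd hr0 hr1
  have hmul2 : (X - C (0 : ℂ)) * (X - C 1) * (X - C (-1)) ∣ p :=
    (c0m1.mul_left c1m1).mul_dvd hmul hrm1
  have hq_eq : (X - C (0 : ℂ)) * (X - C 1) * (X - C (-1)) = X ^ 3 - X := by
    rw [Polynomial.C_0, map_neg, Polynomial.C_1]
    ring
  have hqdvd : (X ^ 3 - X : ℂ[X]) ∣ p := hq_eq ▸ hmul2
  have hqmonic : (X ^ 3 - X : ℂ[X]).Monic := by
    apply monic_X_pow_sub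
    rw [degree_X]
    decide
  exact eq_of_monic_of_associated (minpoly.monic hint) hqmonic
    (associated_of_dvd_dvd hdvd hqdvd)
end

section
/- For P ∈ Gr_{m,n}, the linear map Π_P : X ↦ [P,[P,X]] on ℂ^{n×n} is idempotent (Π_P ∘ Π_P = Π_P), maps Hermitian matrices to Hermitian matrices, and its image of the real vector space of Hermitian n×n matrices equals the tangent space T_P. -/
open Matrix

/-- The tangent space of the Grassmannian at `P`. -/
def tangentSpace (n : ℕ) (P : Matrix (Fin n) (Fin n) ℂ) : Set (Matrix (Fin n) (Fin n) ℂ) :=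
  {H | ∃ Ω : Matrix (Fin n) (Fin n) ℂ, Ωᴴ = -Ω ∧ H = P * Ω - Ω * P}

/-- The matrix commutator `[A,B] = AB − BA`. -/
noncomputable def matComm {n : ℕ} (A B : Matrix (Fin n) (Fin n) ℂ) :
    Matrix (Fin n) (Fin n) ℂ :=
  A * B - B * A

/-- The map `Π_P : X ↦ [P,[P,X]]`. -/
noncomputable def projMap {n : ℕ} (P X : Matrix (Fin n) (Fin n) ℂ) :
    Matrix (Fin n) (Fin n) ℂ :=
  matComm P (matComm P X)

lemma projMap_proj {n : ℕ} (P : Matrix (Fin n) (Fin n) ℂ) (hP2 : P * P = P)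
    (X : Matrix (Fin n) (Fin n) ℂ) : projMap P (projMap P X) = projMap P X := by
  have hP2' : ∀ A : Matrix (Fin n) (Fin n) ℂ, A * P * P = A * P := fun A => by
    rw [mul_assoc, hP2]
  simp only [projMap, matComm, mul_sub, sub_mul, ← mul_assoc, hP2, hP2']
  abel

lemma projMap_herm {n : ℕ} (P : Matrix (Fin n) (Fin n) ℂ) (hPh : Pᴴ = P)
    (X : Matrix (Fin n) (Fin n) ℂ) (hX : Xᴴ = X) : (projMap P X)ᴴ = projMap P X := by
  simp only [projMap, matComm, conjTranspose_sub, conjTranspose_mul, hPh, hX,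
    mul_sub, sub_mul]
  abel

/-- For `P ∈ Gr_{m,n}`, the linear map `Π_P : X ↦ [P,[P,X]]` is idempotent, maps Hermitian
matrices to Hermitian matrices, and its image of the real vector space of Hermitian matrices
equals the tangent space `T_P`. -/
theorem projMap_idempotent_hermitian_image (m n : ℕ) (hm : 0 < m) (hmn : m < n)
    (P : Matrix (Fin n) (Fin n) ℂ) (hP : P ∈ Grassmannian m n) :
    (∀ X : Matrix (Fin n) (Fin n) ℂ, projMap P (projMap P X) = projMap P X) ∧
    (∀ X : Matrix (Fin n) (Fin n) ℂ, Xᴴ = X → (projMap P X)ᴴ = projMap P X) ∧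
    (projMap P) '' {X : Matrix (Fin n) (Fin n) ℂ | Xᴴ = X} = tangentSpace n P := by
  obtain ⟨hPh, hP2, -⟩ := hP
  have hP2' : ∀ A : Matrix (Fin n) (Fin n) ℂ, A * P * P = A * P := fun A => by
    rw [mul_assoc, hP2]
  refine ⟨projMap_proj P hP2, projMap_herm P hPh, ?_⟩
  ext H
  constructor
  · rintro ⟨X, hX, rfl⟩
    replace hX : Xᴴ = X := hX
    refine ⟨matComm P X, ?_, ?_⟩
    · simp only [matComm, conjTranspose_sub, conjTranspose_mul, hPh, hX]
      abel
    · simp only [projMap, matComm]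
  · rintro ⟨Ω, hΩ, rfl⟩
    refine ⟨P * Ω - Ω * P, ?_, ?_⟩
    · simp only [Set.mem_setOf_eq, conjTranspose_sub, conjTranspose_mul, hPh, hΩ,
        neg_mul, mul_neg]
      abel
    · simp only [projMap, matComm, mul_sub, sub_mul, ← mul_assoc, hP2, hP2']
      abel
end

section
/- For P ∈ Gr_{m,n}, every Hermitian matrix X ∈ ℂ^{n×n} decomposes as X = [P,[P,X]] + (X − [P,[P,X]]), where [P,[P,X]] ∈ T_P, and this decomposition is orthogonal for the trace inner product: for every H ∈ T_P and every Y of the form Y = X − [P,[P,X]] with X Hermitian, tr(HY) = 0. In particular N_P := {X − [P,[P,X]] : X ∈ Herm_n} is the orthogonal complement of T_P in Herm_n. -/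
open Matrix

/-- The normal space `N_P = {X − [P,[P,X]] : X Hermitian}`. -/
def normalSpace (n : ℕ) (P : Matrix (Fin n) (Fin n) ℂ) : Set (Matrix (Fin n) (Fin n) ℂ) :=
  {Y | ∃ X : Matrix (Fin n) (Fin n) ℂ, Xᴴ = X ∧ Y = X - projMap P X}


-- auxiliary lemmas
lemma aux_trace_zero {n : ℕ} (A : Matrix (Fin n) (Fin n) ℂ)
    (h : Matrix.trace (A * Aᴴ) = 0) : A = 0 := by
  have h2 : Matrix.trace (A * Aᴴ) = ∑ i, ∑ j, (Complex.normSq (A i j) : ℂ) := by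
    simp only [Matrix.trace, Matrix.diag, Matrix.mul_apply, Matrix.conjTranspose_apply]
    congr 1; ext i; congr 1; ext j
    exact Complex.mul_conj (A i j)
  rw [h2] at h
  have h3 : ∑ i, ∑ j, Complex.normSq (A i j) = 0 := by
    have := congrArg Complex.re h
    simpa using this
  ext i j
  have h4 : ∀ i ∈ Finset.univ, (0:ℝ) ≤ ∑ j, Complex.normSq (A i j) := by
    intro i _; exact Finset.sum_nonneg fun j _ => Complex.normSq_nonneg _
  have h5 := (Finset.sum_eq_zero_iff_of_nonneg h4).mp h3 i (Finset.mem_univ i)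
  have h6 : ∀ j ∈ Finset.univ, (0:ℝ) ≤ Complex.normSq (A i j) := by
    intro j _; exact Complex.normSq_nonneg _
  have h7 := (Finset.sum_eq_zero_iff_of_nonneg h6).mp h5 j (Finset.mem_univ j)
  simpa using (Complex.normSq_eq_zero.mp h7)

/-- For `P ∈ Gr_{m,n}`, every Hermitian `X` decomposes as
`X = [P,[P,X]] + (X − [P,[P,X]])` with `[P,[P,X]] ∈ T_P`, the decomposition is orthogonal
for the trace inner product, and `N_P = {X − [P,[P,X]] : X Hermitian}` is the orthogonal
complement of `T_P` in the real vector space of Hermitian matrices. -/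
theorem normal_decomposition (m n : ℕ) (hm : 0 < m) (hmn : m < n)
    (P : Matrix (Fin n) (Fin n) ℂ) (hP : P ∈ Grassmannian m n) :
    (∀ X : Matrix (Fin n) (Fin n) ℂ, Xᴴ = X →
      X = projMap P X + (X - projMap P X) ∧ projMap P X ∈ tangentSpace n P) ∧
    (∀ H ∈ tangentSpace n P, ∀ X : Matrix (Fin n) (Fin n) ℂ, Xᴴ = X →
      Matrix.trace (H * (X - projMap P X)) = 0) ∧
    normalSpace n P =
      {Y : Matrix (Fin n) (Fin n) ℂ | Yᴴ = Y ∧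
        ∀ H ∈ tangentSpace n P, Matrix.trace (H * Y) = 0} := by
  obtain ⟨hPH, hP2, -⟩ := hP
  -- explicit formula for projMap
  have key : ∀ X : Matrix (Fin n) (Fin n) ℂ,
      projMap P X = P * X + X * P - (P * X * P + P * X * P) := by
    intro X
    simp only [projMap, matComm, mul_sub, sub_mul]
    rw [← mul_assoc P P X, hP2, mul_assoc X P P, hP2]
    noncomm_ring
  -- P * (X - projMap P X) = (X - projMap P X) * P = P X P
  have hPY : ∀ X : Matrix (Fin n) (Fin n) ℂ,
      P * (X - projMap P X) = P * X * P := by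
    intro X
    have h1 : P * (P * X) = P * X := by rw [← mul_assoc, hP2]
    have h3 : P * (P * X * P) = P * X * P := by rw [← mul_assoc, ← mul_assoc, hP2]
    rw [key X]
    simp only [mul_sub, mul_add]
    rw [h1, h3, ← mul_assoc P X P]
    noncomm_ring
  have hYP : ∀ X : Matrix (Fin n) (Fin n) ℂ,
      (X - projMap P X) * P = P * X * P := by
    intro X
    have h2 : (X * P) * P = X * P := by rw [mul_assoc, hP2]
    have h4 : (P * X * P) * P = P * X * P := by rw [mul_assoc, hP2]
    rw [key X]
    simp only [sub_mul, add_mul]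
    rw [h2, h4]
    noncomm_ring
  -- projMap P X is in the tangent space
  have htang : ∀ X : Matrix (Fin n) (Fin n) ℂ, Xᴴ = X →
      projMap P X ∈ tangentSpace n P := by
    intro X hX
    refine ⟨matComm P X, ?_, rfl⟩
    simp only [matComm, conjTranspose_sub, conjTranspose_mul, hPH, hX]
    noncomm_ring
  -- orthogonality
  have horth : ∀ H ∈ tangentSpace n P, ∀ X : Matrix (Fin n) (Fin n) ℂ,
      Matrix.trace (H * (X - projMap P X)) = 0 := by
    rintro H ⟨Ω, hΩ, rfl⟩ X
    set Y := X - projMap P X with hYdef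
    have : (P * Ω - Ω * P) * Y = P * (Ω * Y) - Ω * (P * Y) := by noncomm_ring
    rw [this, trace_sub, trace_mul_comm P (Ω * Y), mul_assoc, hPY, hYP]
    exact sub_self _
  -- Hermiticity of projMap
  have hherm : ∀ X : Matrix (Fin n) (Fin n) ℂ, Xᴴ = X → (projMap P X)ᴴ = projMap P X := by
    intro X hX
    rw [key X]
    simp only [conjTranspose_sub, conjTranspose_add, conjTranspose_mul, hPH, hX]
    noncomm_ring
  refine ⟨fun X hX => ⟨by noncomm_ring, htang X hX⟩, fun H hH X _ => horth H hH X, ?_⟩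
  ext Y
  constructor
  · rintro ⟨X, hX, rfl⟩
    refine ⟨?_, fun H hH => horth H hH X⟩
    rw [conjTranspose_sub, hX, hherm X hX]
  · rintro ⟨hY, hYorth⟩
    refine ⟨Y, hY, ?_⟩
    have hA : P * Y - P * Y * P = 0 := by
      apply aux_trace_zero
      have h1 := hYorth (projMap P Y) (htang Y hY)
      rw [key Y] at h1
      have e : (P * Y - P * Y * P) * (P * Y - P * Y * P)ᴴ
          = (P * Y - P * Y * P) * (Y * P - P * Y * P) := by
        simp only [conjTranspose_sub, conjTranspose_mul, hPH, hY]
        noncomm_ring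
      rw [e]
      -- trace ((PY - PYP)(YP - PYP)) = trace(PYYP) - trace(PYPYP) - trace(PYPYP) + trace(PYPPYP)
      -- goal: expand and relate to h1 which says trace((PY + YP - (PYP+PYP)) * Y) = 0
      have expand : (P * Y - P * Y * P) * (Y * P - P * Y * P)
          = P * (Y * (Y * P)) - P * (Y * (P * (Y * P)))
            - (P * (Y * (P * (Y * P))) - P * (Y * (P * (P * (Y * P))))) := by
        noncomm_ring
      rw [expand, ← mul_assoc P P, hP2]
      have expand2 : (P * Y + Y * P - (P * Y * P + P * Y * P)) * Y
          = P * (Y * Y) + Y * (P * Y) - (P * (Y * (P * Y)) + P * (Y * (P * Y))) := by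
        noncomm_ring
      rw [expand2] at h1
      simp only [trace_sub, trace_add] at h1 ⊢
      rw [trace_mul_comm P (Y * (Y * P)), trace_mul_comm P (Y * (P * (Y * P)))]
      rw [trace_mul_comm Y (P * Y)] at h1
      -- now relate terms
      have c1 : Matrix.trace (Y * (Y * P) * P) = Matrix.trace (P * (Y * Y)) := by
        have e1 : Y * (Y * P) * P = Y * Y * (P * P) := by noncomm_ring
        rw [e1, hP2, trace_mul_comm]
      have c2 : Matrix.trace (Y * (P * (Y * P)) * P) = Matrix.trace (P * (Y * (P * Y))) := by
        have e2 : Y * (P * (Y * P)) * P = Y * (P * Y) * (P * P) := by noncomm_ring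
        rw [e2, hP2]
        have e3 : Y * (P * Y) * P = P * (Y * (P * Y)) ∨ True := Or.inr trivial
        rw [trace_mul_comm]
      rw [c1, c2]
      rw [← mul_assoc P Y Y] at h1
      rw [← mul_assoc P Y Y]
      linear_combination (1/2 : ℂ) * h1
    have hAH : Y * P - P * Y * P = 0 := by
      have := congrArg conjTranspose hA
      simpa only [conjTranspose_sub, conjTranspose_mul, hPH, hY, conjTranspose_zero,
        mul_assoc] using this
    have : projMap P Y = 0 := by
      rw [key Y]
      have : P * Y + Y * P - (P * Y * P + P * Y * P)
          = (P * Y - P * Y * P) + (Y * P - P * Y * P) := by noncomm_ring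
      rw [this, hA, hAH, add_zero]
    rw [this, sub_zero]
end

section
/- Let P₀ ∈ Gr_{m,n} and H ∈ T_{P₀}. Then the curve P : ℝ → ℂ^{n×n}, P(t) := exp(t[H,P₀]) · P₀ · exp(−t[H,P₀]), satisfies P(0) = P₀, P'(0) = H, and the second-order differential equation P''(t) + [P'(t),[P'(t),P(t)]] = 0 for all t ∈ ℝ. -/
open Matrix

/-- The geodesic candidate `P(t) = exp(t[H,P₀]) · P₀ · exp(−t[H,P₀])`. -/
noncomputable def geoCurve {n : ℕ} (P₀ H : Matrix (Fin n) (Fin n) ℂ) (t : ℝ) :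
    Matrix (Fin n) (Fin n) ℂ :=
  NormedSpace.exp ((t : ℂ) • matComm H P₀) * P₀ *
    NormedSpace.exp (-((t : ℂ) • matComm H P₀))

section GeodesicProof

attribute [local instance] Matrix.linftyOpNormedRing Matrix.linftyOpNormedAlgebra

/-- The continuous linear map sending a matrix to its `(i,j)` entry. -/
private noncomputable def entryCLM {n : ℕ} (i j : Fin n) :
    Matrix (Fin n) (Fin n) ℂ →L[ℝ] ℂ :=
  LinearMap.toContinuousLinearMap
    { toFun := fun A => A i j
      map_add' := fun _ _ => rfl
      map_smul' := fun _ _ => rfl }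

private lemma expDeriv {n : ℕ} (A : Matrix (Fin n) (Fin n) ℂ) (t : ℝ) :
    HasDerivAt (fun s : ℝ => NormedSpace.exp ((s : ℂ) • A))
      (NormedSpace.exp ((t : ℂ) • A) * A) t := by
  have h1 : HasDerivAt (fun u : ℂ => NormedSpace.exp (u • A))
      (NormedSpace.exp ((t : ℂ) • A) * A) (t : ℂ) :=
    hasDerivAt_exp_smul_const A (t : ℂ)
  have h2 := h1.scomp t Complex.ofRealCLM.hasDerivAt
  simp only [Complex.ofRealCLM_apply, Complex.ofReal_one, one_smul] at h2
  exact h2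

/-- Let `P₀ ∈ Gr_{m,n}` and `H ∈ T_{P₀}`. The curve
`P(t) = exp(t[H,P₀]) P₀ exp(−t[H,P₀])` satisfies `P(0) = P₀`, `P'(0) = H`, and the
geodesic equation `P''(t) + [P'(t),[P'(t),P(t)]] = 0` for all `t ∈ ℝ` (derivatives of
matrix-valued curves taken entrywise). -/
theorem geodesic_equation (m n : ℕ) (hm : 0 < m) (hmn : m < n)
    (P₀ H : Matrix (Fin n) (Fin n) ℂ) (hP₀ : P₀ ∈ Grassmannian m n)
    (hH : H ∈ tangentSpace n P₀) :
    geoCurve P₀ H 0 = P₀ ∧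
    ∃ D D2 : ℝ → Matrix (Fin n) (Fin n) ℂ,
      (∀ (t : ℝ) (i j : Fin n), HasDerivAt (fun s => geoCurve P₀ H s i j) (D t i j) t) ∧
      (∀ (t : ℝ) (i j : Fin n), HasDerivAt (fun s => D s i j) (D2 t i j) t) ∧
      D 0 = H ∧
      ∀ t : ℝ, D2 t + matComm (D t) (matComm (D t) (geoCurve P₀ H t)) = 0 := by
  obtain ⟨-, hP2, -⟩ := hP₀
  obtain ⟨Ω, -, hHdef⟩ := hH
  set A : Matrix (Fin n) (Fin n) ℂ := matComm H P₀ with hA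
  have fact1 : matComm A P₀ = H := by
    rw [hA, hHdef]
    have h1 : ∀ X : Matrix (Fin n) (Fin n) ℂ, P₀ * (P₀ * X) = P₀ * X := fun X => by
      rw [← mul_assoc, hP2]
    simp only [matComm, sub_mul, mul_sub, mul_assoc, h1, hP2]
    abel
  set g : ℝ → Matrix (Fin n) (Fin n) ℂ := fun t => NormedSpace.exp ((t : ℂ) • A) with hgdef
  set h : ℝ → Matrix (Fin n) (Fin n) ℂ := fun t => NormedSpace.exp ((t : ℂ) • (-A))
    with hhdef
  have hgeo : ∀ t : ℝ, geoCurve P₀ H t = g t * P₀ * h t := fun t => by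
    simp [geoCurve, hgdef, hhdef, smul_neg, hA]
  have hAg : ∀ t : ℝ, Commute A (g t) := fun t =>
    (((Commute.refl A).smul_right ((t : ℂ))).exp_right)
  have hAh : ∀ t : ℝ, Commute A (h t) := fun t =>
    ((((Commute.refl A).neg_right).smul_right ((t : ℂ))).exp_right)
  have hgh : ∀ t : ℝ, g t * h t = 1 := fun t => by
    show NormedSpace.exp ((t : ℂ) • A) * NormedSpace.exp ((t : ℂ) • (-A)) = 1
    rw [smul_neg]
    exact (NormedSpace.exp_add_of_commute ((Commute.refl ((t : ℂ) • A)).neg_right)).symm.trans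
      (by rw [add_neg_cancel, NormedSpace.exp_zero])
  have hhg : ∀ t : ℝ, h t * g t = 1 := fun t => by
    show NormedSpace.exp ((t : ℂ) • (-A)) * NormedSpace.exp ((t : ℂ) • A) = 1
    rw [smul_neg]
    exact (NormedSpace.exp_add_of_commute ((Commute.refl ((t : ℂ) • A)).neg_left)).symm.trans
      (by rw [neg_add_cancel, NormedSpace.exp_zero])
  have hgd : ∀ t : ℝ, HasDerivAt g (g t * A) t := expDeriv A
  have hhd : ∀ t : ℝ, HasDerivAt h (h t * (-A)) t := by
    intro t
    have := expDeriv (-A) t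
    simpa [hhdef] using this
  set P : ℝ → Matrix (Fin n) (Fin n) ℂ := geoCurve P₀ H with hPdef
  set D : ℝ → Matrix (Fin n) (Fin n) ℂ := fun t => matComm A (P t) with hDdef
  set D2 : ℝ → Matrix (Fin n) (Fin n) ℂ := fun t => matComm A (D t) with hD2def
  have hPd : ∀ t : ℝ, HasDerivAt P (D t) t := by
    intro t
    have h1 := ((hgd t).mul_const P₀).mul (hhd t)
    have he : (fun s => g s * P₀ * h s) = P := funext fun s => (hgeo s).symm
    change HasDerivAt (fun s => g s * P₀ * h s) _ t at h1
    rw [he] at h1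
    convert h1 using 1
    rw [hDdef]
    dsimp only
    rw [matComm, hgeo t]
    have e1 : g t * A * P₀ * h t = A * (g t * P₀ * h t) := by
      rw [← (hAg t).eq]
      simp [mul_assoc]
    have e2 : g t * P₀ * (h t * -A) = -((g t * P₀ * h t) * A) := by
      have h3 : h t * -A = -(A * h t) := by rw [mul_neg, (hAh t).eq]
      rw [h3]
      simp [mul_assoc, (hAh t).eq]
    rw [e1, e2, ← sub_eq_add_neg]
  have hDd : ∀ t : ℝ, HasDerivAt D (D2 t) t := by
    intro t
    have h1 := ((hPd t).const_mul A).sub ((hPd t).mul_const A)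
    have he : (fun s => A * P s - P s * A) = D := funext fun s => by
      rw [hDdef]; rfl
    change HasDerivAt (fun s => A * P s - P s * A) _ t at h1
    rw [he] at h1
    exact h1
  have hP0 : P 0 = P₀ := by
    rw [hPdef]
    simp [geoCurve, NormedSpace.exp_zero]
  refine ⟨hP0, D, D2, ?_, ?_, ?_, ?_⟩
  · intro t i j
    exact (entryCLM i j).hasFDerivAt.comp_hasDerivAt t (hPd t)
  · intro t i j
    exact (entryCLM i j).hasFDerivAt.comp_hasDerivAt t (hDd t)
  · show matComm A (P 0) = H
    rw [hP0, fact1]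
  · intro t
    have c2 : ∀ X Y : Matrix (Fin n) (Fin n) ℂ,
        (g t * X * h t) * (g t * Y * h t) = g t * (X * Y) * h t := fun X Y => by
      calc (g t * X * h t) * (g t * Y * h t) = g t * X * (h t * g t) * Y * h t := by
            simp [mul_assoc]
        _ = g t * (X * Y) * h t := by rw [hhg t]; simp [mul_assoc]
    have cComm : ∀ X Y : Matrix (Fin n) (Fin n) ℂ,
        matComm (g t * X * h t) (g t * Y * h t) = g t * matComm X Y * h t := fun X Y => by
      rw [matComm, matComm, c2, c2, mul_sub, sub_mul]
    have cA : ∀ X : Matrix (Fin n) (Fin n) ℂ,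
        matComm A (g t * X * h t) = g t * matComm A X * h t := fun X => by
      rw [matComm, matComm]
      have e1 : A * (g t * X * h t) = g t * (A * X) * h t := by
        rw [← mul_assoc, ← mul_assoc, (hAg t).eq]
        simp [mul_assoc]
      have e2 : (g t * X * h t) * A = g t * (X * A) * h t := by
        rw [mul_assoc, ← (hAh t).eq]
        simp [mul_assoc]
      rw [e1, e2, mul_sub, sub_mul]
    have hDt : D t = g t * H * h t := by
      show matComm A (P t) = g t * H * h t
      rw [hgeo t, cA, fact1]
    have hPt : P t = g t * P₀ * h t := hgeo t
    show matComm A (D t) + matComm (D t) (matComm (D t) (P t)) = 0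
    rw [hDt, hPt, cComm, hA, cComm, cA]
    rw [← add_mul, ← mul_add]
    have hz : matComm A H + matComm H (matComm H P₀) = 0 := by
      rw [← hA, matComm, matComm]
      abel
    rw [hz]
    simp
end GeodesicProof
end
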